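/- arXiv:2506.18356 — 2 statements merged into one kernel-verified Lean document; each statement's English description precedes it below -/
import Mathlib

section
/- Let a ∈ ℝⁿ, let B be an n×n×n tensor, define r(x) = x − a − Bx² and R_x = I − Bx: − B:x, and let x* satisfy r(x*) = 0 with R_{x*} invertible. Fix a vector norm on ℝⁿ and the induced matrix norm, and let β ≥ 0 be such that ‖R_x − R_y‖ ≤ β‖x − y‖ for all x, y ∈ ℝⁿ. Let x̃_k ∈ ℝⁿ, let E_k be a matrix and e_k, ε_k vectors, and suppose: ‖R_{x̃_k}⁻¹E_k‖ ≤ ν for some 0 ≤ ν < 1 (with R_{x̃_k} invertible); β‖R_{x*}⁻¹‖·‖x̃_k − x*‖ ≤ μ for some 0 ≤ μ < 1; R_{x̃_k} + E_k is invertible and h̃_k := (R_{x̃_k} + E_k)⁻¹(r_k + e_k) with r_k = x̃_k − a − Bx̃_k²; x̃_{k+1} = x̃_k − h̃_k + ε_k; and ‖ε_k‖ ≤ u(‖x̃_k − x*‖ + ‖x*‖ + ‖h̃_k‖) for some u ≥ 0. Then ‖x̃_{k+1} − x*‖ ≤ G_k‖x̃_k − x*‖ + g_k, where G_k = ν/(1−ν)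 + μ/(2(1−μ)(1−ν)) + u and g_k = ‖R_{x*}⁻¹e_k‖/((1−ν)(1−μ)) + u(‖x*‖ + ‖h̃_k‖). -/
open Matrix

/-!
Write `d = x̃_k − x*` and `q = B d²`. Since `r(x*) = 0`, the residual expands as
`r_k = R_{x̃_k} d + q`, and `(R_{x*} − R_{x̃_k}) d = 2q`, so the Lipschitz bound gives
`‖R_{x*}⁻¹ q‖ ≤ μ‖d‖/2`. The new error before rounding, `v = d − h̃_k`, solves
`(R_{x̃_k} + E_k) v = E_k d − (q + e_k)`. Both `R_{x̃_k} + E_k` and `R_{x̃_k}` (as a perturbation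
of `R_{x*}`) are relatively small perturbations of an invertible matrix, which costs the factors
`1/(1−ν)` and `1/(1−μ)`; the rounding error `ε_k` is then added by the triangle inequality.
-/

/-- `(tapp B x y) i = Σ_{j,k} B i j k * x j * y k`, the tensor–vector–vector product. -/
def tapp {n : ℕ} (B : Fin n → Fin n → Fin n → ℝ) (x y : Fin n → ℝ) : Fin n → ℝ :=
  fun i => ∑ j, ∑ k, B i j k * x j * y k

/-- The matrix `Bx:`, satisfying `(Bx:) h = B x h`; `(Bx:)_{ij} = Σ_k b_{ikj} x_k`. -/
def matL {n : ℕ} (B : Fin n → Fin n → Fin n → ℝ) (x : Fin n → ℝ) :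
    Matrix (Fin n) (Fin n) ℝ :=
  Matrix.of fun i j => ∑ k, B i k j * x k

/-- The matrix `B:x`, satisfying `(B:x) h = B h x`; `(B:x)_{ij} = Σ_k b_{ijk} x_k`. -/
def matR {n : ℕ} (B : Fin n → Fin n → Fin n → ℝ) (x : Fin n → ℝ) :
    Matrix (Fin n) (Fin n) ℝ :=
  Matrix.of fun i j => ∑ k, B i j k * x k

/-- `R_x = I − Bx: − B:x`, the negative Jacobian of `x ↦ a + Bx² − x`. -/
def Rmat {n : ℕ} (B : Fin n → Fin n → Fin n → ℝ) (x : Fin n → ℝ) :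
    Matrix (Fin n) (Fin n) ℝ :=
  1 - matL B x - matR B x

/-- The matrix norm induced by the (sup) norm on `Fin n → ℝ`: the operator norm of
the linear map `v ↦ A *ᵥ v`. -/
noncomputable def opNorm {n : ℕ} (A : Matrix (Fin n) (Fin n) ℝ) : ℝ :=
  ‖LinearMap.toContinuousLinearMap (Matrix.mulVecLin A)‖

section OpNorm

variable {n : ℕ}

lemma norm_mulVec_le_opNorm (A : Matrix (Fin n) (Fin n) ℝ) (v : Fin n → ℝ) :
    ‖A *ᵥ v‖ ≤ opNorm A * ‖v‖ :=
  (LinearMap.toContinuousLinearMap (Matrix.mulVecLin A)).le_opNorm v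

lemma opNorm_nonneg (A : Matrix (Fin n) (Fin n) ℝ) : 0 ≤ opNorm A :=
  norm_nonneg _

lemma opNorm_mul_le (A C : Matrix (Fin n) (Fin n) ℝ) :
    opNorm (A * C) ≤ opNorm A * opNorm C :=
  ContinuousLinearMap.opNorm_le_bound _ (mul_nonneg (opNorm_nonneg A) (opNorm_nonneg C))
    fun v => calc
      ‖(A * C) *ᵥ v‖ = ‖A *ᵥ (C *ᵥ v)‖ := by rw [mulVec_mulVec]
      _ ≤ opNorm A * (opNorm C * ‖v‖) :=
        (norm_mulVec_le_opNorm A _).trans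
          (mul_le_mul_of_nonneg_left (norm_mulVec_le_opNorm C v) (opNorm_nonneg A))
      _ = opNorm A * opNorm C * ‖v‖ := by ring

lemma le_div_one_sub_of_le_add_mul {x s μ : ℝ} (hμ : μ < 1) (h : x ≤ s + μ * x) :
    x ≤ s / (1 - μ) := by
  rw [le_div_iff₀ (by linarith)]
  linarith

lemma norm_le_of_add_mulVec_eq {A E : Matrix (Fin n) (Fin n) ℝ} {ν : ℝ}
    (hA : IsUnit A.det) (hν : opNorm (A⁻¹ * E) ≤ ν) (hν1 : ν < 1)
    {v z : Fin n → ℝ} (h : (A + E) *ᵥ v = z) :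
    ‖v‖ ≤ ‖A⁻¹ *ᵥ z‖ / (1 - ν) := by
  have hv : v = A⁻¹ *ᵥ z - (A⁻¹ * E) *ᵥ v := by
    rw [← h, add_mulVec, mulVec_add, mulVec_mulVec, mulVec_mulVec, nonsing_inv_mul _ hA,
      one_mulVec, add_sub_cancel_right]
  refine le_div_one_sub_of_le_add_mul hν1 ?_
  calc ‖v‖ = ‖A⁻¹ *ᵥ z - (A⁻¹ * E) *ᵥ v‖ := by rw [← hv]
    _ ≤ ‖A⁻¹ *ᵥ z‖ + opNorm (A⁻¹ * E) * ‖v‖ :=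
      (norm_sub_le _ _).trans (add_le_add_right (norm_mulVec_le_opNorm _ _) _)
    _ ≤ ‖A⁻¹ *ᵥ z‖ + ν * ‖v‖ := by gcongr

lemma norm_inv_mulVec_le_of_opNorm_sub_le {A C : Matrix (Fin n) (Fin n) ℝ} {μ : ℝ}
    (hA : IsUnit A.det) (hC : IsUnit C.det) (hμ : opNorm C⁻¹ * opNorm (A - C) ≤ μ)
    (hμ1 : μ < 1) (z : Fin n → ℝ) :
    ‖A⁻¹ *ᵥ z‖ ≤ ‖C⁻¹ *ᵥ z‖ / (1 - μ) :=
  norm_le_of_add_mulVec_eq hC ((opNorm_mul_le _ _).trans hμ) hμ1 (by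
    rw [add_sub_cancel, mulVec_mulVec, mul_nonsing_inv _ hA, one_mulVec])

end OpNorm

section Tensor

variable {n : ℕ} (B : Fin n → Fin n → Fin n → ℝ)

lemma matL_mulVec (x h : Fin n → ℝ) : matL B x *ᵥ h = tapp B x h := by
  funext i
  simp only [matL, tapp, mulVec, dotProduct, of_apply, Finset.sum_mul]
  rw [Finset.sum_comm]

lemma matR_mulVec (x h : Fin n → ℝ) : matR B x *ᵥ h = tapp B h x := by
  funext i
  simp only [matR, tapp, mulVec, dotProduct, of_apply, Finset.sum_mul]
  congr 1; funext j; congr 1; funext k; ring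

lemma tapp_sub_left (x y z : Fin n → ℝ) : tapp B (x - y) z = tapp B x z - tapp B y z := by
  funext i
  simp [tapp, mul_sub, sub_mul, Finset.sum_sub_distrib]

lemma tapp_sub_right (x y z : Fin n → ℝ) : tapp B x (y - z) = tapp B x y - tapp B x z := by
  funext i
  simp [tapp, mul_sub, Finset.sum_sub_distrib]

lemma Rmat_mulVec (x h : Fin n → ℝ) : Rmat B x *ᵥ h = h - tapp B x h - tapp B h x := by
  rw [Rmat, sub_mulVec, sub_mulVec, one_mulVec, matL_mulVec, matR_mulVec]

lemma residual_eq_Rmat_mulVec_add_tapp {a xstar : Fin n → ℝ}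
    (hroot : xstar - a - tapp B xstar xstar = 0) (x : Fin n → ℝ) :
    x - a - tapp B x x = Rmat B x *ᵥ (x - xstar) + tapp B (x - xstar) (x - xstar) := by
  have ha : a = xstar - tapp B xstar xstar := by
    rw [← sub_eq_zero, ← neg_eq_zero, ← hroot]
    abel
  rw [ha, Rmat_mulVec]
  simp only [tapp_sub_left, tapp_sub_right]
  abel

lemma Rmat_sub_Rmat_mulVec (x y : Fin n → ℝ) :
    (Rmat B y - Rmat B x) *ᵥ (x - y) = (2 : ℝ) • tapp B (x - y) (x - y) := by
  rw [sub_mulVec, Rmat_mulVec, Rmat_mulVec, two_smul]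
  simp only [tapp_sub_left, tapp_sub_right]
  abel

lemma norm_inv_mulVec_tapp_le {β : ℝ}
    (hβ : ∀ x y : Fin n → ℝ, opNorm (Rmat B x - Rmat B y) ≤ β * ‖x - y‖) (x y : Fin n → ℝ) :
    ‖(Rmat B y)⁻¹ *ᵥ tapp B (x - y) (x - y)‖
      ≤ β * opNorm (Rmat B y)⁻¹ * ‖x - y‖ * ‖x - y‖ / 2 := by
  have hdouble : (2 : ℝ) • ((Rmat B y)⁻¹ *ᵥ tapp B (x - y) (x - y))
      = (Rmat B y)⁻¹ *ᵥ ((Rmat B y - Rmat B x) *ᵥ (x - y)) := by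
    rw [Rmat_sub_Rmat_mulVec, mulVec_smul]
  have hbound : ‖(Rmat B y)⁻¹ *ᵥ ((Rmat B y - Rmat B x) *ᵥ (x - y))‖
      ≤ β * opNorm (Rmat B y)⁻¹ * ‖x - y‖ * ‖x - y‖ := calc
    _ ≤ opNorm (Rmat B y)⁻¹ * (opNorm (Rmat B y - Rmat B x) * ‖x - y‖) :=
      (norm_mulVec_le_opNorm _ _).trans
        (mul_le_mul_of_nonneg_left (norm_mulVec_le_opNorm _ _) (opNorm_nonneg _))
    _ ≤ opNorm (Rmat B y)⁻¹ * (β * ‖y - x‖ * ‖x - y‖) :=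
      mul_le_mul_of_nonneg_left (mul_le_mul_of_nonneg_right (hβ y x) (norm_nonneg _))
        (opNorm_nonneg _)
    _ = β * opNorm (Rmat B y)⁻¹ * ‖x - y‖ * ‖x - y‖ := by rw [norm_sub_rev]; ring
  rw [← hdouble, norm_smul, Real.norm_two] at hbound
  linarith

end Tensor

theorem newton_limiting_accuracy_step_general
    {n : ℕ} (a : Fin n → ℝ) (B : Fin n → Fin n → Fin n → ℝ)
    (xstar : Fin n → ℝ)
    (hroot : xstar - a - tapp B xstar xstar = 0)
    (hRstar : IsUnit (Rmat B xstar).det)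
    (β : ℝ)
    (hβ : ∀ x y : Fin n → ℝ, opNorm (Rmat B x - Rmat B y) ≤ β * ‖x - y‖)
    (xk : Fin n → ℝ) (Ek : Matrix (Fin n) (Fin n) ℝ) (ek εk : Fin n → ℝ)
    (ν : ℝ) (hν1 : ν < 1)
    (hRk : IsUnit (Rmat B xk).det)
    (hν : opNorm ((Rmat B xk)⁻¹ * Ek) ≤ ν)
    (μ : ℝ) (hμ1 : μ < 1)
    (hμ : β * opNorm ((Rmat B xstar)⁻¹) * ‖xk - xstar‖ ≤ μ)
    (hREdet : IsUnit (Rmat B xk + Ek).det)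
    (hk : Fin n → ℝ)
    (hhk : hk = (Rmat B xk + Ek)⁻¹ *ᵥ ((xk - a - tapp B xk xk) + ek))
    (xk1 : Fin n → ℝ) (hxk1 : xk1 = xk - hk + εk)
    (u : ℝ)
    (hεk : ‖εk‖ ≤ u * (‖xk - xstar‖ + ‖xstar‖ + ‖hk‖)) :
    ‖xk1 - xstar‖ ≤
      (ν / (1 - ν) + μ / (2 * (1 - μ) * (1 - ν)) + u) * ‖xk - xstar‖ +
      (‖(Rmat B xstar)⁻¹ *ᵥ ek‖ / ((1 - ν) * (1 - μ)) + u * (‖xstar‖ + ‖hk‖)) := by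
  set d := xk - xstar
  set q := tapp B d d
  have hν' : 0 < 1 - ν := by linarith
  have hμ' : 0 < 1 - μ := by linarith
  have hnewton : (Rmat B xk + Ek) *ᵥ (d - hk) = Ek *ᵥ d - (q + ek) := by
    have hsolve : (Rmat B xk + Ek) *ᵥ hk = Rmat B xk *ᵥ d + q + ek := by
      rw [hhk, mulVec_mulVec, mul_nonsing_inv _ hREdet, one_mulVec,
        residual_eq_Rmat_mulVec_add_tapp B hroot]
    rw [mulVec_sub, hsolve, add_mulVec]
    abel
  have hperturb := norm_inv_mulVec_le_of_opNorm_sub_le hRk hRstar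
    ((mul_le_mul_of_nonneg_left (hβ xk xstar) (opNorm_nonneg _)).trans (by linarith)) hμ1
  have hrhs : ‖(Rmat B xk)⁻¹ *ᵥ (Ek *ᵥ d - (q + ek))‖
      ≤ ν * ‖d‖ + (μ * ‖d‖ / 2 + ‖(Rmat B xstar)⁻¹ *ᵥ ek‖) / (1 - μ) := by
    have hq : ‖(Rmat B xstar)⁻¹ *ᵥ q‖ ≤ μ * ‖d‖ / 2 :=
      (norm_inv_mulVec_tapp_le B hβ xk xstar).trans (by gcongr)
    rw [mulVec_sub, mulVec_mulVec]
    refine (norm_sub_le _ _).trans (add_le_add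
      ((norm_mulVec_le_opNorm _ _).trans (by gcongr)) ((hperturb _).trans ?_))
    rw [mulVec_add]
    gcongr
    exact (norm_add_le _ _).trans (by linarith)
  have hv := (norm_le_of_add_mulVec_eq hRk hν hν1 hnewton).trans
    (div_le_div_of_nonneg_right hrhs hν'.le)
  have hstep : ‖xk1 - xstar‖ ≤ ‖d - hk‖ + ‖εk‖ := by
    rw [hxk1, show xk - hk + εk - xstar = d - hk + εk by simp only [d]; abel]
    exact norm_add_le _ _
  have hG : (ν * ‖d‖ + (μ * ‖d‖ / 2 + ‖(Rmat B xstar)⁻¹ *ᵥ ek‖) / (1 - μ)) / (1 - ν)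
      = (ν / (1 - ν) + μ / (2 * (1 - μ) * (1 - ν))) * ‖d‖
        + ‖(Rmat B xstar)⁻¹ *ᵥ ek‖ / ((1 - ν) * (1 - μ)) := by
    field_simp
    ring
  linarith

/-- One step of Newton's method in floating-point arithmetic
(variant of Tisseur's Theorem 2.2 proved in the paper): the new error satisfies
`‖x̃_{k+1} − x*‖ ≤ G_k ‖x̃_k − x*‖ + g_k` with
`g_k` governed by `‖R_{x*}⁻¹ e_k‖` rather than `‖R_{x*}⁻¹‖·‖e_k‖`. -/
theorem newton_limiting_accuracy_step
    {n : ℕ} (a : Fin n → ℝ) (B : Fin n → Fin n → Fin n → ℝ)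
    (xstar : Fin n → ℝ)
    (hroot : xstar - a - tapp B xstar xstar = 0)
    (hRstar : IsUnit (Rmat B xstar).det)
    (β : ℝ) (hβ0 : 0 ≤ β)
    (hβ : ∀ x y : Fin n → ℝ, opNorm (Rmat B x - Rmat B y) ≤ β * ‖x - y‖)
    (xk : Fin n → ℝ) (Ek : Matrix (Fin n) (Fin n) ℝ) (ek εk : Fin n → ℝ)
    (ν : ℝ) (hν0 : 0 ≤ ν) (hν1 : ν < 1)
    (hRk : IsUnit (Rmat B xk).det)
    (hν : opNorm ((Rmat B xk)⁻¹ * Ek) ≤ ν)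
    (μ : ℝ) (hμ0 : 0 ≤ μ) (hμ1 : μ < 1)
    (hμ : β * opNorm ((Rmat B xstar)⁻¹) * ‖xk - xstar‖ ≤ μ)
    (hREdet : IsUnit (Rmat B xk + Ek).det)
    (hk : Fin n → ℝ)
    (hhk : hk = (Rmat B xk + Ek)⁻¹ *ᵥ ((xk - a - tapp B xk xk) + ek))
    (xk1 : Fin n → ℝ) (hxk1 : xk1 = xk - hk + εk)
    (u : ℝ) (hu0 : 0 ≤ u)
    (hεk : ‖εk‖ ≤ u * (‖xk - xstar‖ + ‖xstar‖ + ‖hk‖)) :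
    ‖xk1 - xstar‖ ≤
      (ν / (1 - ν) + μ / (2 * (1 - μ) * (1 - ν)) + u) * ‖xk - xstar‖ +
      (‖(Rmat B xstar)⁻¹ *ᵥ ek‖ / ((1 - ν) * (1 - μ)) + u * (‖xstar‖ + ‖hk‖)) :=
  newton_limiting_accuracy_step_general a B xstar hroot hRstar β hβ xk Ek ek εk ν hν1 hRk hν μ hμ1
    hμ hREdet hk hhk xk1 hxk1 u hεk
end

section
/- Let a ∈ ℝⁿ with a ≥ 0 entrywise and let B be an entrywise nonnegative n×n×n tensor, and suppose the equation x = a + Bx² has at least one nonnegative solution x̄. Define x_0 = 0 and x_{k+1} = a + Bx_k² for k ≥ 0. Then the sequence is monotonically increasing with x_k ≤ x̄ entrywise for all k, it converges to a limit m, m satisfies m = a + Bm², and m ≤ x entrywise for every nonnegative solution x of the equation (i.e., m is the minimal nonnegative solution). -/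
open Matrix

/-!
On the nonnegative orthant the map `F v = a + Bv²` is monotone and maps the orthant into
itself, so the orbit of `0` is increasing and stays below every nonnegative supersolution
`F p ≤ p`; in particular it is bounded by `xbar`. Hence it converges to its supremum `m`,
which is a fixed point by continuity of `F` and lies below every nonnegative solution because
each iterate does.
-/

section Iteration

variable {α : Type*} {F : α → α} {s : Set α} {x : ℕ → α}

theorem mem_of_mapsTo_of_succ (hFs : Set.MapsTo F s s) (hx : ∀ k, x (k + 1) = F (x k))
    (h0 : x 0 ∈ s) (k : ℕ) : x k ∈ s := by
  induction k with
  | zero => exact h0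
  | succ k ih => exact hx k ▸ hFs ih

variable [Preorder α]

theorem monotone_of_monotoneOn_of_succ (hF : MonotoneOn F s) (hFs : Set.MapsTo F s s)
    (hx : ∀ k, x (k + 1) = F (x k)) (h0 : x 0 ∈ s) (h01 : x 0 ≤ x 1) : Monotone x := by
  have hmem := mem_of_mapsTo_of_succ hFs hx h0
  refine monotone_nat_of_le_succ fun k => ?_
  induction k with
  | zero => exact h01
  | succ k ih =>
    rw [hx k, hx (k + 1)]
    exact hF (hmem k) (hmem (k + 1)) ih

theorem le_of_monotoneOn_of_map_le (hF : MonotoneOn F s) (hFs : Set.MapsTo F s s)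
    (hx : ∀ k, x (k + 1) = F (x k)) (h0 : x 0 ∈ s) {p : α} (hp : p ∈ s) (hFp : F p ≤ p)
    (h0p : x 0 ≤ p) (k : ℕ) : x k ≤ p := by
  induction k with
  | zero => exact h0p
  | succ k ih =>
    rw [hx k]
    exact (hF (mem_of_mapsTo_of_succ hFs hx h0 k) hp ih).trans hFp

end Iteration

theorem isFixedPt_of_tendsto_of_succ {α : Type*} [TopologicalSpace α] [T2Space α]
    {F : α → α} {x : ℕ → α} {m : α} (hF : Continuous F) (hx : ∀ k, x (k + 1) = F (x k))
    (hm : Filter.Tendsto x Filter.atTop (nhds m)) : Function.IsFixedPt F m := by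
  have hsucc : Filter.Tendsto (fun k => F (x k)) Filter.atTop (nhds m) := by
    simpa only [hx] using (Filter.tendsto_add_atTop_iff_nat 1).2 hm
  exact tendsto_nhds_unique (hF.continuousAt.tendsto.comp hm) hsucc

section Tensor

variable {n : ℕ} {B : Fin n → Fin n → Fin n → ℝ}

theorem tapp_nonneg (hB : ∀ i j k, 0 ≤ B i j k) {u v : Fin n → ℝ} (hu : 0 ≤ u)
    (hv : 0 ≤ v) : 0 ≤ tapp B u v := fun i =>
  Finset.sum_nonneg fun j _ => Finset.sum_nonneg fun k _ =>
    mul_nonneg (mul_nonneg (hB i j k) (hu j)) (hv k)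

theorem tapp_le_tapp (hB : ∀ i j k, 0 ≤ B i j k) {u u' v v' : Fin n → ℝ} (hu : 0 ≤ u)
    (huu' : u ≤ u') (hv : 0 ≤ v) (hvv' : v ≤ v') : tapp B u v ≤ tapp B u' v' := fun i => by
  refine Finset.sum_le_sum fun j _ => Finset.sum_le_sum fun k _ => ?_
  exact mul_le_mul (mul_le_mul_of_nonneg_left (huu' j) (hB i j k)) (hvv' k) (hv k)
    (mul_nonneg (hB i j k) ((hu j).trans (huu' j)))

theorem continuous_tapp_self (B : Fin n → Fin n → Fin n → ℝ) :
    Continuous fun v => tapp B v v := by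
  unfold tapp
  fun_prop

theorem mapsTo_add_tapp_self {a : Fin n → ℝ} (ha : 0 ≤ a) (hB : ∀ i j k, 0 ≤ B i j k) :
    Set.MapsTo (fun v => a + tapp B v v) (Set.Ici 0) (Set.Ici 0) := fun _ hv =>
  add_nonneg ha (tapp_nonneg hB hv hv)

theorem monotoneOn_add_tapp_self (a : Fin n → ℝ) (hB : ∀ i j k, 0 ≤ B i j k) :
    MonotoneOn (fun v => a + tapp B v v) (Set.Ici 0) := fun _ hu _ _ huv =>
  add_le_add_right (tapp_le_tapp hB hu huv hu huv) a

end Tensor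

/-- The fixed-point iteration `x_0 = 0`, `x_{k+1} = a + B x_k²` is monotonically
increasing, bounded above by any nonnegative solution, and converges to the minimal
nonnegative solution of `x = a + Bx²` (part of Theorem `thm.21` in the paper). -/
theorem fixed_point_iteration_minimal_solution
    {n : ℕ} (a : Fin n → ℝ) (B : Fin n → Fin n → Fin n → ℝ)
    (ha : ∀ i, 0 ≤ a i) (hB : ∀ i j k, 0 ≤ B i j k)
    (xbar : Fin n → ℝ) (hxbar0 : ∀ i, 0 ≤ xbar i)
    (hxbar : xbar = a + tapp B xbar xbar)
    (x : ℕ → (Fin n → ℝ))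
    (hx0 : x 0 = 0)
    (hxs : ∀ k, x (k + 1) = a + tapp B (x k) (x k)) :
    (∀ k i, x k i ≤ x (k + 1) i) ∧
    (∀ k i, x k i ≤ xbar i) ∧
    ∃ m : Fin n → ℝ,
      Filter.Tendsto x Filter.atTop (nhds m) ∧
      (∀ i, 0 ≤ m i) ∧
      m = a + tapp B m m ∧
      ∀ s : Fin n → ℝ, (∀ i, 0 ≤ s i) → s = a + tapp B s s → ∀ i, m i ≤ s i := by
  set F : (Fin n → ℝ) → Fin n → ℝ := fun v => a + tapp B v v
  have hFs : Set.MapsTo F (Set.Ici 0) (Set.Ici 0) := mapsTo_add_tapp_self ha hB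
  have hF : MonotoneOn F (Set.Ici 0) := monotoneOn_add_tapp_self a hB
  have h0 : x 0 ∈ Set.Ici 0 := hx0.ge
  have hbelow : ∀ s : Fin n → ℝ, 0 ≤ s → s = F s → ∀ k, x k ≤ s := fun s hs hsF =>
    le_of_monotoneOn_of_map_le hF hFs hxs h0 hs hsF.symm.le (hx0 ▸ hs)
  have hmono : Monotone x :=
    monotone_of_monotoneOn_of_succ hF hFs hxs h0 (hx0 ▸ mem_of_mapsTo_of_succ hFs hxs h0 1)
  have hbdd : BddAbove (Set.range x) :=
    ⟨xbar, Set.forall_mem_range.2 (hbelow xbar hxbar0 hxbar)⟩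
  have hlim : Filter.Tendsto x Filter.atTop (nhds (⨆ k, x k)) := tendsto_atTop_ciSup hmono hbdd
  refine ⟨fun k => hmono k.le_succ, hbelow xbar hxbar0 hxbar, ⨆ k, x k, hlim,
    h0.trans (le_ciSup hbdd 0), ?_, fun s hs hsF => ciSup_le (hbelow s hs hsF)⟩
  exact (isFixedPt_of_tendsto_of_succ (continuous_const.add (continuous_tapp_self B)) hxs
    hlim).symm
end
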